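/- arXiv:2310.02456 — 6 statements merged into one kernel-verified Lean document; each statement's English description precedes it below -/
import Mathlib

section
/- (Corollary 3.1: policy invariance of using the optimal advantage as reward.) In a finite MDP with discount factor 0 ≤ γ < 1, let V : S → ℝ and Q : S × A → ℝ satisfy the Bellman optimality equations for reward r, and define the reward function r_A(s,a) := Q(s,a) − V(s). If V' : S → ℝ and Q' : S × A → ℝ satisfy the Bellman optimality equations for reward r_A with the same transition probabilities and any discount factor 0 ≤ γ' < 1, then V'(s) = 0 for every s, Q'(s,a) = r_A(s,a) for every (s,a), and for every state s the set of actions maximizing a ↦ Q'(s,a) equals the set of actions maximizing a ↦ Q(s,a); that is, the optimal (greedy) actions under reward r_A coincide exactly with the optimal actions under reward r in every state. -/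
/-- Corollary 3.1: policy invariance of using the optimal advantage as reward.
Let `(V, Q)` satisfy the Bellman optimality equations for reward `r` with discount `γ`, and define
`r_A(s,a) := Q(s,a) − V(s)`. If `(V', Q')` satisfy the Bellman optimality equations for reward
`r_A` (same transitions, any discount `0 ≤ γ' < 1`), then `V' = 0`, `Q' = r_A`, and in every state
the set of actions maximizing `Q'(s,·)` equals the set of actions maximizing `Q(s,·)`. -/
theorem policy_invariance_of_advantage_as_reward
    {S A : Type*} [Fintype S] [Fintype A] [Nonempty S] [Nonempty A]
    (p : S → A → S → ℝ)
    (hp0 : ∀ s a s', 0 ≤ p s a s')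
    (hp1 : ∀ s a, ∑ s', p s a s' = 1)
    (r : S × A → ℝ) (γ : ℝ) (hγ0 : 0 ≤ γ) (hγ1 : γ < 1)
    (V : S → ℝ) (Q : S × A → ℝ)
    (hV : ∀ s, V s = Finset.univ.sup' Finset.univ_nonempty (fun a => Q (s, a)))
    (hQ : ∀ s a, Q (s, a) = r (s, a) + γ * ∑ s', p s a s' * V s')
    (rA : S × A → ℝ) (hrA : ∀ s a, rA (s, a) = Q (s, a) - V s)
    (γ' : ℝ) (hγ'0 : 0 ≤ γ') (hγ'1 : γ' < 1)
    (V' : S → ℝ) (Q' : S × A → ℝ)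
    (hV' : ∀ s, V' s = Finset.univ.sup' Finset.univ_nonempty (fun a => Q' (s, a)))
    (hQ' : ∀ s a, Q' (s, a) = rA (s, a) + γ' * ∑ s', p s a s' * V' s') :
    (∀ s, V' s = 0) ∧
      (∀ s a, Q' (s, a) = rA (s, a)) ∧
      (∀ s : S, {a : A | ∀ a', Q' (s, a') ≤ Q' (s, a)} =
        {a : A | ∀ a', Q (s, a') ≤ Q (s, a)}) := by

  classical
  -- sup of rA over actions is 0
  have hrA_le : ∀ s a, rA (s, a) ≤ 0 := by
    intro s a
    have h := Finset.le_sup' (fun a => Q (s, a)) (Finset.mem_univ a)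
    rw [hrA]
    have := hV s
    linarith
  have hrA_ex : ∀ s, ∃ a, rA (s, a) = 0 := by
    intro s
    obtain ⟨a, -, ha⟩ := Finset.exists_mem_eq_sup' (Finset.univ_nonempty (α := A))
      (fun a => Q (s, a))
    exact ⟨a, by rw [hrA, hV s, ha]; ring⟩
  set M : ℝ := Finset.univ.sup' Finset.univ_nonempty (fun s => |V' s|) with hMdef
  have habsM : ∀ s, |V' s| ≤ M := fun s =>
    Finset.le_sup' (fun s => |V' s|) (Finset.mem_univ s)
  have hM0 : 0 ≤ M := le_trans (abs_nonneg _) (habsM (Classical.arbitrary S))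
  have hsum_ub : ∀ s a, ∑ s', p s a s' * V' s' ≤ M := by
    intro s a
    calc ∑ s', p s a s' * V' s' ≤ ∑ s', p s a s' * M := by
          apply Finset.sum_le_sum
          intro s' _
          exact mul_le_mul_of_nonneg_left
            (le_trans (le_abs_self _) (habsM s')) (hp0 s a s')
      _ = M := by rw [← Finset.sum_mul, hp1, one_mul]
  have hsum_lb : ∀ s a, -M ≤ ∑ s', p s a s' * V' s' := by
    intro s a
    calc -M = ∑ s', p s a s' * (-M) := by rw [← Finset.sum_mul, hp1, one_mul]
      _ ≤ ∑ s', p s a s' * V' s' := by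
          apply Finset.sum_le_sum
          intro s' _
          exact mul_le_mul_of_nonneg_left
            (neg_le_of_abs_le (habsM s')) (hp0 s a s')
  have key : ∀ s, |V' s| ≤ γ' * M := by
    intro s
    rw [abs_le]
    constructor
    · obtain ⟨a0, ha0⟩ := hrA_ex s
      have h1 : Q' (s, a0) ≤ V' s := by
        rw [hV']
        exact Finset.le_sup' (fun a => Q' (s, a)) (Finset.mem_univ a0)
      have h2 : γ' * (-M) ≤ γ' * ∑ s', p s a0 s' * V' s' :=
        mul_le_mul_of_nonneg_left (hsum_lb s a0) hγ'0
      have h3 := hQ' s a0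
      rw [ha0] at h3
      linarith
    · rw [hV']
      apply Finset.sup'_le
      intro a _
      have h2 : γ' * ∑ s', p s a s' * V' s' ≤ γ' * M :=
        mul_le_mul_of_nonneg_left (hsum_ub s a) hγ'0
      have := hrA_le s a
      rw [hQ' s a]
      linarith
  have hMle : M ≤ γ' * M := by
    rw [hMdef]
    exact Finset.sup'_le _ _ fun s _ => key s
  have hMz : M = 0 := by nlinarith
  have hV'0 : ∀ s, V' s = 0 := by
    intro s
    have := habsM s
    rw [hMz] at this
    exact abs_eq_zero.mp (le_antisymm this (abs_nonneg _))
  refine ⟨hV'0, ?_, ?_⟩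
  · intro s a
    rw [hQ' s a]
    have : ∑ s', p s a s' * V' s' = 0 := by
      apply Finset.sum_eq_zero
      intro s' _
      rw [hV'0 s', mul_zero]
    rw [this, mul_zero, add_zero]
  · intro s
    ext a
    simp only [Set.mem_setOf_eq]
    constructor
    · intro h a'
      have := h a'
      rw [hQ' s a', hQ' s a, hrA s a', hrA s a] at this
      have hz : ∀ b, ∑ s', p s b s' * V' s' = 0 := fun b =>
        Finset.sum_eq_zero fun s' _ => by rw [hV'0 s', mul_zero]
      rw [hz a', hz a] at this
      linarith
    · intro h a'
      have := h a'
      rw [hQ' s a', hQ' s a, hrA s a', hrA s a]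
      have hz : ∀ b, ∑ s', p s b s' * V' s' = 0 := fun b =>
        Finset.sum_eq_zero fun s' _ => by rw [hV'0 s', mul_zero]
      rw [hz a', hz a]
      linarith
end

section
/- (Discount invariance when the optimal advantage is used as reward.) In a finite MDP, let V : S → ℝ and Q : S × A → ℝ satisfy the Bellman optimality equations for reward r with discount 0 ≤ γ < 1, and define r_A(s,a) := Q(s,a) − V(s). For any two discount factors γ₁, γ₂ with 0 ≤ γ₁ < 1 and 0 ≤ γ₂ < 1, if (V₁, Q₁) and (V₂, Q₂) satisfy the Bellman optimality equations for reward r_A (same transition probabilities) with discounts γ₁ and γ₂ respectively, then Q₁ = Q₂; in fact both equal r_A. Hence the discount factor has no effect on the optimal Q-function, and therefore on the sets of greedy optimal actions, of the MDP whose reward is r_A. -/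
/-- Auxiliary: if `rA ≤ 0` pointwise with `sup_a rA(s,a) = 0` attained, then any Bellman
solution for reward `rA` with discount `0 ≤ γ' < 1` has `Q' = rA`. -/
lemma bellman_advantage_fixed
    {S A : Type*} [Fintype S] [Fintype A] [Nonempty S] [Nonempty A]
    (p : S → A → S → ℝ)
    (hp0 : ∀ s a s', 0 ≤ p s a s')
    (hp1 : ∀ s a, ∑ s', p s a s' = 1)
    (rA : S × A → ℝ)
    (hle : ∀ s a, rA (s, a) ≤ 0)
    (hex : ∀ s, ∃ a, rA (s, a) = 0)
    (γ' : ℝ) (h0 : 0 ≤ γ') (h1 : γ' < 1)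
    (V' : S → ℝ) (Q' : S × A → ℝ)
    (hV' : ∀ s, V' s = Finset.univ.sup' Finset.univ_nonempty (fun a => Q' (s, a)))
    (hQ' : ∀ s a, Q' (s, a) = rA (s, a) + γ' * ∑ s', p s a s' * V' s') :
    ∀ s a, Q' (s, a) = rA (s, a) := by
  set M : ℝ := Finset.univ.sup' Finset.univ_nonempty (fun s => |V' s|) with hM
  have hM0 : 0 ≤ M := by
    obtain ⟨s⟩ := ‹Nonempty S›
    exact le_trans (abs_nonneg (V' s)) (Finset.le_sup' (fun s => |V' s|) (Finset.mem_univ s))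
  have hub : ∀ s', |V' s'| ≤ M := fun s' => Finset.le_sup' (fun s => |V' s|) (Finset.mem_univ s')
  have hsum_le : ∀ s a, ∑ s', p s a s' * V' s' ≤ M := by
    intro s a
    calc ∑ s', p s a s' * V' s' ≤ ∑ s', p s a s' * M := by
          apply Finset.sum_le_sum
          intro s' _
          exact mul_le_mul_of_nonneg_left (le_trans (le_abs_self _) (hub s')) (hp0 s a s')
      _ = M := by rw [← Finset.sum_mul, hp1, one_mul]
  have hsum_ge : ∀ s a, -M ≤ ∑ s', p s a s' * V' s' := by
    intro s a
    calc (-M) = ∑ s', p s a s' * (-M) := by rw [← Finset.sum_mul, hp1, one_mul]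
      _ ≤ ∑ s', p s a s' * V' s' := by
          apply Finset.sum_le_sum
          intro s' _
          exact mul_le_mul_of_nonneg_left (neg_le_of_abs_le (hub s')) (hp0 s a s')
  have key : ∀ s, |V' s| ≤ γ' * M := by
    intro s
    rw [abs_le]
    constructor
    · obtain ⟨a, ha⟩ := hex s
      have h2 : Q' (s, a) ≤ V' s := by
        rw [hV' s]; exact Finset.le_sup' (fun a => Q' (s, a)) (Finset.mem_univ a)
      have : γ' * (-M) ≤ Q' (s, a) := by
        rw [hQ', ha, zero_add]
        exact mul_le_mul_of_nonneg_left (hsum_ge s a) h0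
      linarith [this, h2]
    · rw [hV' s]
      apply Finset.sup'_le
      intro a _
      rw [hQ']
      have := mul_le_mul_of_nonneg_left (hsum_le s a) h0
      linarith [hle s a]
  have hMle : M ≤ γ' * M := by
    rw [hM]
    apply Finset.sup'_le
    intro s _
    exact key s
  have hMzero : M = 0 := by nlinarith
  have hVzero : ∀ s', V' s' = 0 := by
    intro s'
    have := hub s'
    rw [hMzero] at this
    exact abs_eq_zero.mp (le_antisymm this (abs_nonneg _))
  intro s a
  rw [hQ']
  have : ∑ s', p s a s' * V' s' = 0 := by
    apply Finset.sum_eq_zero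
    intro s' _
    rw [hVzero s', mul_zero]
  rw [this, mul_zero, add_zero]

/-- Discount invariance when the optimal advantage is used as reward.
Let `(V, Q)` satisfy the Bellman optimality equations for reward `r` with discount `0 ≤ γ < 1`,
and define `r_A(s,a) := Q(s,a) − V(s)`. If `(V₁, Q₁)` and `(V₂, Q₂)` satisfy the Bellman
optimality equations for reward `r_A` (same transitions) with discounts `γ₁` and `γ₂`
respectively, then `Q₁ = Q₂`; in fact both equal `r_A`. Hence the sets of greedy optimal actions
also agree in every state. -/
theorem discount_invariance_of_advantage_as_reward
    {S A : Type*} [Fintype S] [Fintype A] [Nonempty S] [Nonempty A]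
    (p : S → A → S → ℝ)
    (hp0 : ∀ s a s', 0 ≤ p s a s')
    (hp1 : ∀ s a, ∑ s', p s a s' = 1)
    (r : S × A → ℝ) (γ : ℝ) (hγ0 : 0 ≤ γ) (hγ1 : γ < 1)
    (V : S → ℝ) (Q : S × A → ℝ)
    (hV : ∀ s, V s = Finset.univ.sup' Finset.univ_nonempty (fun a => Q (s, a)))
    (hQ : ∀ s a, Q (s, a) = r (s, a) + γ * ∑ s', p s a s' * V s')
    (rA : S × A → ℝ) (hrA : ∀ s a, rA (s, a) = Q (s, a) - V s)
    (γ₁ γ₂ : ℝ) (hγ₁0 : 0 ≤ γ₁) (hγ₁1 : γ₁ < 1) (hγ₂0 : 0 ≤ γ₂) (hγ₂1 : γ₂ < 1)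
    (V₁ : S → ℝ) (Q₁ : S × A → ℝ)
    (hV₁ : ∀ s, V₁ s = Finset.univ.sup' Finset.univ_nonempty (fun a => Q₁ (s, a)))
    (hQ₁ : ∀ s a, Q₁ (s, a) = rA (s, a) + γ₁ * ∑ s', p s a s' * V₁ s')
    (V₂ : S → ℝ) (Q₂ : S × A → ℝ)
    (hV₂ : ∀ s, V₂ s = Finset.univ.sup' Finset.univ_nonempty (fun a => Q₂ (s, a)))
    (hQ₂ : ∀ s a, Q₂ (s, a) = rA (s, a) + γ₂ * ∑ s', p s a s' * V₂ s') :
    Q₁ = Q₂ ∧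
      (∀ s a, Q₁ (s, a) = rA (s, a)) ∧
      (∀ s a, Q₂ (s, a) = rA (s, a)) ∧
      (∀ s : S, {a : A | ∀ a', Q₁ (s, a') ≤ Q₁ (s, a)} =
        {a : A | ∀ a', Q₂ (s, a') ≤ Q₂ (s, a)}) := by
  have hle : ∀ s a, rA (s, a) ≤ 0 := by
    intro s a
    rw [hrA]
    have : Q (s, a) ≤ V s := by rw [hV s]; exact Finset.le_sup' (fun a => Q (s, a)) (Finset.mem_univ a)
    linarith
  have hex : ∀ s, ∃ a, rA (s, a) = 0 := by
    intro s
    obtain ⟨a, _, ha⟩ := Finset.exists_mem_eq_sup' (Finset.univ_nonempty) (fun a => Q (s, a) : A → ℝ)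
    exact ⟨a, by rw [hrA, ← ha, ← hV s, sub_self]⟩
  have h1 := bellman_advantage_fixed p hp0 hp1 rA hle hex γ₁ hγ₁0 hγ₁1 V₁ Q₁ hV₁ hQ₁
  have h2 := bellman_advantage_fixed p hp0 hp1 rA hle hex γ₂ hγ₂0 hγ₂1 V₂ Q₂ hV₂ hQ₂
  have heq : Q₁ = Q₂ := by
    funext sa
    obtain ⟨s, a⟩ := sa
    rw [h1, h2]
  exact ⟨heq, h1, h2, fun s => by rw [heq]⟩
end

section
/- (Potential-based shaping with the optimal value function as potential yields the optimal advantage as reward.) In a finite MDP with discount 0 ≤ γ < 1, let V : S → ℝ and Q : S × A → ℝ satisfy the Bellman optimality equations for reward r. Define the shaped reward r'(s,a) := r(s,a) + γ * ∑_{s'} p s a s' * V(s') − V(s), i.e., potential-based shaping with potential Φ = V. Then r'(s,a) = Q(s,a) − V(s) for every (s,a) (the shaped reward equals the optimal advantage function), and for any (V'', Q'') satisfying the Bellman optimality equations for reward r' with any discount 0 ≤ γ'' < 1, one has V''(s) = 0 for every s and Q''(s,a) = Q(s,a) − V(s) for every (s,a). -/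
/-- Potential-based shaping with the optimal value function as potential yields the optimal
advantage as reward. Let `(V, Q)` satisfy the Bellman optimality equations for reward `r` with
discount `0 ≤ γ < 1`, and define the shaped reward
`r'(s,a) := r(s,a) + γ * ∑_{s'} p s a s' * V(s') − V(s)` (potential `Φ = V`). Then
`r'(s,a) = Q(s,a) − V(s)` everywhere, and for any `(V'', Q'')` satisfying the Bellman optimality
equations for reward `r'` with any discount `0 ≤ γ'' < 1`, we have `V'' = 0` and
`Q''(s,a) = Q(s,a) − V(s)` everywhere. -/
theorem shaping_with_optimal_value_potential
    {S A : Type*} [Fintype S] [Fintype A] [Nonempty S] [Nonempty A]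
    (p : S → A → S → ℝ)
    (hp0 : ∀ s a s', 0 ≤ p s a s')
    (hp1 : ∀ s a, ∑ s', p s a s' = 1)
    (r : S × A → ℝ) (γ : ℝ) (hγ0 : 0 ≤ γ) (hγ1 : γ < 1)
    (V : S → ℝ) (Q : S × A → ℝ)
    (hV : ∀ s, V s = Finset.univ.sup' Finset.univ_nonempty (fun a => Q (s, a)))
    (hQ : ∀ s a, Q (s, a) = r (s, a) + γ * ∑ s', p s a s' * V s')
    (r' : S × A → ℝ)
    (hr' : ∀ s a, r' (s, a) = r (s, a) + γ * (∑ s', p s a s' * V s') - V s)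
    (γ'' : ℝ) (hγ''0 : 0 ≤ γ'') (hγ''1 : γ'' < 1)
    (V'' : S → ℝ) (Q'' : S × A → ℝ)
    (hV'' : ∀ s, V'' s = Finset.univ.sup' Finset.univ_nonempty (fun a => Q'' (s, a)))
    (hQ'' : ∀ s a, Q'' (s, a) = r' (s, a) + γ'' * ∑ s', p s a s' * V'' s') :
    (∀ s a, r' (s, a) = Q (s, a) - V s) ∧
      (∀ s, V'' s = 0) ∧
      (∀ s a, Q'' (s, a) = Q (s, a) - V s) := by

  have part1 : ∀ s a, r' (s, a) = Q (s, a) - V s := by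
    intro s a; rw [hr', hQ]
  -- Q ≤ V
  have hQleV : ∀ s a, Q (s, a) ≤ V s := by
    intro s a; rw [hV s]
    exact Finset.le_sup' (fun a => Q (s, a)) (Finset.mem_univ a)
  set N : ℝ := Finset.univ.sup' Finset.univ_nonempty V'' with hN
  set m : ℝ := Finset.univ.inf' Finset.univ_nonempty V'' with hm
  have hsumN : ∀ s a, ∑ s', p s a s' * V'' s' ≤ N := by
    intro s a
    calc ∑ s', p s a s' * V'' s' ≤ ∑ s', p s a s' * N := by
          apply Finset.sum_le_sum
          intro i _
          exact mul_le_mul_of_nonneg_left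
            (Finset.le_sup' V'' (Finset.mem_univ i)) (hp0 s a i)
      _ = N := by rw [← Finset.sum_mul, hp1 s a, one_mul]
  have hsumm : ∀ s a, m ≤ ∑ s', p s a s' * V'' s' := by
    intro s a
    calc m = ∑ s', p s a s' * m := by rw [← Finset.sum_mul, hp1 s a, one_mul]
      _ ≤ ∑ s', p s a s' * V'' s' := by
          apply Finset.sum_le_sum
          intro i _
          exact mul_le_mul_of_nonneg_left
            (Finset.inf'_le V'' (Finset.mem_univ i)) (hp0 s a i)
  have hupper : ∀ s, V'' s ≤ γ'' * N := by
    intro s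
    rw [hV'' s]
    apply Finset.sup'_le
    intro a _
    rw [hQ'' s a, part1 s a]
    have h1 : Q (s, a) - V s ≤ 0 := sub_nonpos.mpr (hQleV s a)
    have h2 : γ'' * ∑ s', p s a s' * V'' s' ≤ γ'' * N :=
      mul_le_mul_of_nonneg_left (hsumN s a) hγ''0
    linarith
  have hNle : N ≤ γ'' * N := by
    apply Finset.sup'_le
    intro s _
    exact hupper s
  have hN0 : N ≤ 0 := by nlinarith
  have hlower : ∀ s, γ'' * m ≤ V'' s := by
    intro s
    obtain ⟨a, _, ha⟩ := Finset.exists_mem_eq_sup' (Finset.univ_nonempty (α := A))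
      (fun a => Q (s, a))
    have hQa : Q (s, a) = V s := by rw [hV s, ha]
    have : γ'' * m ≤ Q'' (s, a) := by
      rw [hQ'' s a, part1 s a, hQa]
      have := mul_le_mul_of_nonneg_left (hsumm s a) hγ''0
      linarith
    calc γ'' * m ≤ Q'' (s, a) := this
      _ ≤ V'' s := by
          rw [hV'' s]
          exact Finset.le_sup' (fun a => Q'' (s, a)) (Finset.mem_univ a)
  have hmge : γ'' * m ≤ m := by
    apply Finset.le_inf'
    intro s _
    exact hlower s
  have hm0 : 0 ≤ m := by nlinarith
  have hVzero : ∀ s, V'' s = 0 := by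
    intro s
    have h1 : V'' s ≤ N := Finset.le_sup' V'' (Finset.mem_univ s)
    have h2 : m ≤ V'' s := Finset.inf'_le V'' (Finset.mem_univ s)
    linarith
  refine ⟨part1, hVzero, fun s a => ?_⟩
  rw [hQ'' s a, part1 s a]
  have : ∑ s', p s a s' * V'' s' = 0 := by
    apply Finset.sum_eq_zero
    intro i _
    rw [hVzero i, mul_zero]
  rw [this]
  ring
end

section
/- (The regret preference model reduces to the partial return preference model for deterministic segments ending in terminal states with a common start state.) In a finite deterministic MDP, suppose V : S → ℝ and Q : S × A → ℝ satisfy the undiscounted Bellman optimality equations. Let (s¹, a¹) be a T-consistent segment of length n₁ and (s², a²) a T-consistent segment of length n₂, with the same starting state s¹(0) = s²(0), and with V(s¹(n₁)) = 0 and V(s²(n₂)) = 0 (both end in terminal states of zero value). Then logistic( (∑_{i<n₁} (Q(s¹(i),a¹(i)) − V(s¹(i)))) − (∑_{i<n₂} (Q(s²(i),a²(i)) − V(s²(i)))) ) = logistic( (∑_{i<n₁} r(s¹(i),a¹(i))) − (∑_{i<n₂} r(s²(i),a²(i))) ); that is, the regret preference probability for segment 1 over segment 2 equals the partial return preference probability.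 -/
/-- The logistic function `x ↦ 1 / (1 + exp (−x))`. -/
noncomputable def logistic (x : ℝ) : ℝ := 1 / (1 + Real.exp (-x))

/-!
The Bellman equation for `Q` turns the optimal advantage of a transition `s →ₐ s'` into
`r (s, a) + V s' - V s`. Along a consistent segment the value terms telescope, so the summed
advantage is the partial return plus `V (last state) - V (first state)`. For two segments with a
common start state and terminal states of value zero these corrections cancel in the difference.
-/

theorem Fin.sum_succ_sub_castSucc {M : Type*} [AddCommGroup M] {n : ℕ} (f : Fin (n + 1) → M) :
    ∑ i : Fin n, (f i.succ - f i.castSucc) = f (Fin.last n) - f 0 := by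
  have split_ends : f 0 + ∑ i : Fin n, f i.succ = ∑ i : Fin n, f i.castSucc + f (Fin.last n) :=
    (Fin.sum_univ_succ f).symm.trans (Fin.sum_univ_castSucc f)
  rw [Finset.sum_sub_distrib, sub_eq_sub_iff_add_eq_add, add_comm, split_ends, add_comm]

theorem sum_advantage_eq_partial_return_add {S A : Type*} (T : S → A → S) (r : S × A → ℝ)
    (V : S → ℝ) (Q : S × A → ℝ) (hQ : ∀ s a, Q (s, a) = r (s, a) + V (T s a))
    {n : ℕ} (s : Fin (n + 1) → S) (a : Fin n → A)
    (hcons : ∀ i : Fin n, s i.succ = T (s i.castSucc) (a i)) :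
    ∑ i : Fin n, (Q (s i.castSucc, a i) - V (s i.castSucc)) =
      (∑ i : Fin n, r (s i.castSucc, a i)) + (V (s (Fin.last n)) - V (s 0)) := by
  have advantage_eq (i : Fin n) : Q (s i.castSucc, a i) - V (s i.castSucc) =
      r (s i.castSucc, a i) + (V (s i.succ) - V (s i.castSucc)) := by
    rw [hQ, hcons i]; ring
  rw [Finset.sum_congr rfl fun i _ => advantage_eq i, Finset.sum_add_distrib]
  exact congrArg _ (Fin.sum_succ_sub_castSucc fun i => V (s i))

theorem regret_pref_eq_partial_return_pref_general
    {S A : Type*}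
    (T : S → A → S) (r : S × A → ℝ)
    (V : S → ℝ) (Q : S × A → ℝ)
    (hQ : ∀ s a, Q (s, a) = r (s, a) + V (T s a))
    (n1 n2 : ℕ)
    (s1 : Fin (n1 + 1) → S) (a1 : Fin n1 → A)
    (hcons1 : ∀ i : Fin n1, s1 i.succ = T (s1 i.castSucc) (a1 i))
    (s2 : Fin (n2 + 1) → S) (a2 : Fin n2 → A)
    (hcons2 : ∀ i : Fin n2, s2 i.succ = T (s2 i.castSucc) (a2 i))
    (hstart : s1 0 = s2 0)
    (hend1 : V (s1 (Fin.last n1)) = 0)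
    (hend2 : V (s2 (Fin.last n2)) = 0) :
    logistic ((∑ i : Fin n1, (Q (s1 i.castSucc, a1 i) - V (s1 i.castSucc))) -
        ∑ i : Fin n2, (Q (s2 i.castSucc, a2 i) - V (s2 i.castSucc))) =
      logistic ((∑ i : Fin n1, r (s1 i.castSucc, a1 i)) -
        ∑ i : Fin n2, r (s2 i.castSucc, a2 i)) := by
  rw [sum_advantage_eq_partial_return_add T r V Q hQ s1 a1 hcons1,
    sum_advantage_eq_partial_return_add T r V Q hQ s2 a2 hcons2, hend1, hend2, hstart]
  congr 1
  ring

/-- The regret preference model reduces to the partial return preference model for deterministic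
segments ending in terminal (zero-value) states with a common start state. -/
theorem regret_pref_eq_partial_return_pref
    {S A : Type*} [Fintype S] [Fintype A] [Nonempty S] [Nonempty A]
    (T : S → A → S) (r : S × A → ℝ)
    (V : S → ℝ) (Q : S × A → ℝ)
    (hV : ∀ s, V s = Finset.univ.sup' Finset.univ_nonempty (fun a => Q (s, a)))
    (hQ : ∀ s a, Q (s, a) = r (s, a) + V (T s a))
    (n1 n2 : ℕ)
    (s1 : Fin (n1 + 1) → S) (a1 : Fin n1 → A)
    (hcons1 : ∀ i : Fin n1, s1 i.succ = T (s1 i.castSucc) (a1 i))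
    (s2 : Fin (n2 + 1) → S) (a2 : Fin n2 → A)
    (hcons2 : ∀ i : Fin n2, s2 i.succ = T (s2 i.castSucc) (a2 i))
    (hstart : s1 0 = s2 0)
    (hend1 : V (s1 (Fin.last n1)) = 0)
    (hend2 : V (s2 (Fin.last n2)) = 0) :
    logistic ((∑ i : Fin n1, (Q (s1 i.castSucc, a1 i) - V (s1 i.castSucc))) -
        ∑ i : Fin n2, (Q (s2 i.castSucc, a2 i) - V (s2 i.castSucc))) =
      logistic ((∑ i : Fin n1, r (s1 i.castSucc, a1 i)) -
        ∑ i : Fin n2, r (s2 i.castSucc, a2 i)) :=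
  regret_pref_eq_partial_return_pref_general T r V Q hQ n1 n2 s1 a1 hcons1 s2 a2 hcons2 hstart hend1
    hend2
end

section
/- (Corollary 3.2: when the per-state maximum of the learned advantage is 0, optimal behavior is greedy behavior.) Let Â : S × A → ℝ on finite nonempty types S and A satisfy max over a of Â(s,a) = 0 for every state s. For any transition probabilities p, any discount 0 ≤ γ < 1, and any (V', Q') satisfying the Bellman optimality equations for the reward function Â, one has V'(s) = 0 for every s and Q'(s,a) = Â(s,a) for every (s,a); hence for every state s, the set of actions maximizing a ↦ Q'(s,a) equals the set of actions maximizing a ↦ Â(s,a), so the optimal (greedy with respect to Q') policies of the MDP with reward Â are exactly the policies greedy with respect to Â. -/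
/-- Corollary 3.2: when the per-state maximum of the learned advantage is 0, optimal behavior is
greedy behavior. If `max_a Â(s,a) = 0` for every state and `(V', Q')` satisfy the Bellman
optimality equations for the reward function `Â` (any transitions, any discount `0 ≤ γ < 1`),
then `V' = 0`, `Q' = Â`, and in every state the set of actions maximizing `Q'(s,·)` equals the
set of actions maximizing `Â(s,·)`. -/
theorem greedy_matches_optimal_when_max_advantage_zero
    {S A : Type*} [Fintype S] [Fintype A] [Nonempty S] [Nonempty A]
    (Ahat : S × A → ℝ)
    (hmax : ∀ s : S, Finset.univ.sup' Finset.univ_nonempty (fun a => Ahat (s, a)) = 0)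
    (p : S → A → S → ℝ)
    (hp0 : ∀ s a s', 0 ≤ p s a s')
    (hp1 : ∀ s a, ∑ s', p s a s' = 1)
    (γ : ℝ) (hγ0 : 0 ≤ γ) (hγ1 : γ < 1)
    (V' : S → ℝ) (Q' : S × A → ℝ)
    (hV' : ∀ s, V' s = Finset.univ.sup' Finset.univ_nonempty (fun a => Q' (s, a)))
    (hQ' : ∀ s a, Q' (s, a) = Ahat (s, a) + γ * ∑ s', p s a s' * V' s') :
    (∀ s, V' s = 0) ∧
      (∀ s a, Q' (s, a) = Ahat (s, a)) ∧
      (∀ s : S, {a : A | ∀ a', Q' (s, a') ≤ Q' (s, a)} =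
        {a : A | ∀ a', Ahat (s, a') ≤ Ahat (s, a)}) := by
  classical
  set M : ℝ := Finset.univ.sup' Finset.univ_nonempty (fun s => |V' s|) with hM
  have hMmem : ∀ s, |V' s| ≤ M := fun s =>
    Finset.le_sup' (fun s => |V' s|) (Finset.mem_univ s)
  have hsum : ∀ s a, |∑ s', p s a s' * V' s'| ≤ M := by
    intro s a
    calc |∑ s', p s a s' * V' s'| ≤ ∑ s', |p s a s' * V' s'| :=
          Finset.abs_sum_le_sum_abs _ _
      _ = ∑ s', p s a s' * |V' s'| := by
          refine Finset.sum_congr rfl fun s' _ => ?_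
          rw [abs_mul, abs_of_nonneg (hp0 s a s')]
      _ ≤ ∑ s', p s a s' * M := by
          refine Finset.sum_le_sum fun s' _ => ?_
          exact mul_le_mul_of_nonneg_left (hMmem s') (hp0 s a s')
      _ = M := by rw [← Finset.sum_mul, hp1, one_mul]
  have hVle : ∀ s, |V' s| ≤ γ * M := by
    intro s
    rw [abs_le]
    constructor
    · obtain ⟨a, _, ha⟩ := Finset.exists_mem_eq_sup' (Finset.univ_nonempty)
        (fun a => Ahat (s, a))
      have hVge : Q' (s, a) ≤ V' s := by
        rw [hV']
        exact Finset.le_sup' (fun a => Q' (s, a)) (Finset.mem_univ a)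
      have : Q' (s, a) = γ * ∑ s', p s a s' * V' s' := by
        rw [hQ', ← ha, hmax s, zero_add]
      nlinarith [hsum s a, abs_le.mp (hsum s a)]
    · rw [hV']
      apply Finset.sup'_le
      intro a _
      have hA : Ahat (s, a) ≤ 0 := by
        rw [← hmax s]
        exact Finset.le_sup' (fun a => Ahat (s, a)) (Finset.mem_univ a)
      have := (abs_le.mp (hsum s a)).2
      rw [hQ']
      nlinarith
  have hMle : M ≤ γ * M := by
    obtain ⟨s, _, hs⟩ := Finset.exists_mem_eq_sup' (Finset.univ_nonempty (α := S))
      (fun s => |V' s|)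
    have := hVle s; linarith [hs]
  have hM0 : 0 ≤ M := le_trans (abs_nonneg _) (hMmem (Classical.arbitrary S))
  have hMz : M = 0 := by nlinarith
  have hV0 : ∀ s, V' s = 0 := fun s =>
    abs_eq_zero.mp (le_antisymm (hMz ▸ hMmem s) (abs_nonneg _))
  have hQA : ∀ s a, Q' (s, a) = Ahat (s, a) := by
    intro s a
    rw [hQ']
    have : ∑ s', p s a s' * V' s' = 0 := by
      apply Finset.sum_eq_zero
      intro s' _
      rw [hV0 s', mul_zero]
    rw [this, mul_zero, add_zero]
  refine ⟨hV0, hQA, fun s => ?_⟩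
  ext a
  simp only [Set.mem_setOf_eq, hQA]
end

section
/- (If every loop has negative partial return, non-terminating trajectories have return diverging to negative infinity.) In a finite deterministic MDP with transition function T : S → A → S and reward r : S × A → ℝ, suppose that every loop—every T-consistent segment of length n ≥ 1 whose final state equals its initial state—has strictly negative partial return. Then for every infinite T-consistent trajectory, given by s : ℕ → S and a : ℕ → A with s(t+1) = T (s(t)) (a(t)) for all t, the sequence of partial sums N ↦ ∑_{t<N} r(s(t), a(t)) tends to −∞ as N → ∞. -/
/-!
Erasing a loop from a trajectory leaves a trajectory, and by pigeonhole every stretch of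
`Fintype.card S` steps contains a loop. Since loops of bounded length are determined by finitely
many data, their average rewards are bounded away from `0` by some `-ε`. Repeatedly erasing loops
therefore shows that the return up to time `N` is at most `C - ε N`.
-/

open Finset Filter

section Excise

variable {α : Type*}

def excise (f : ℕ → α) (p d : ℕ) : ℕ → α := fun t => if t < p then f t else f (t + d)

theorem excise_apply₂ {β γ : Type*} (g : α → β → γ) (f : ℕ → α) (f' : ℕ → β) (p d t : ℕ) :
    excise (fun t => g (f t) (f' t)) p d t = g (excise f p d t) (excise f' p d t) :=
  (apply_ite₂ g _ _ _ _ _).symm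

theorem sum_range_excise {M : Type*} [AddCommMonoid M] (f : ℕ → M) (p d m : ℕ) :
    ∑ t ∈ range (p + d + m), f t =
      ∑ t ∈ range (p + m), excise f p d t + ∑ t ∈ range d, f (p + t) := by
  have hhead : ∑ t ∈ range p, excise f p d t = ∑ t ∈ range p, f t :=
    sum_congr rfl fun t ht => if_pos (mem_range.1 ht)
  have htail : ∀ t, excise f p d (p + t) = f (p + d + t) := fun t => by
    simp only [excise, if_neg (Nat.not_lt.2 (Nat.le_add_right p t))]
    congr 1
    omega
  simp only [sum_range_add, hhead, htail]
  abel

end Excise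

section Trajectory

variable {S A : Type*} (T : S → A → S)

def IsTrajectory (s : ℕ → S) (a : ℕ → A) : Prop :=
  ∀ t, s (t + 1) = T (s t) (a t)

variable {T} {s : ℕ → S} {a : ℕ → A}

theorem IsTrajectory.shift (h : IsTrajectory T s a) (p : ℕ) :
    IsTrajectory T (fun t => s (p + t)) (fun t => a (p + t)) :=
  fun t => h (p + t)

theorem IsTrajectory.excise {p d : ℕ} (h : IsTrajectory T s a) (hloop : s (p + d) = s p) :
    IsTrajectory T (excise s p d) (excise a p d) := by
  intro t
  simp only [_root_.excise]
  rcases lt_trichotomy (t + 1) p with ht | ht | ht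
  · rw [if_pos ht, if_pos (by omega), if_pos (by omega)]
    exact h t
  · rw [if_neg ht.not_lt, if_pos (by omega), if_pos (by omega), ht, hloop, ← ht]
    exact h t
  · rw [if_neg (by omega), if_neg (by omega), if_neg (by omega), Nat.add_right_comm]
    exact h (t + d)

theorem exists_loop_within_card [Fintype S] (s : ℕ → S) :
    ∃ p d, 0 < d ∧ p + d ≤ Fintype.card S ∧ s (p + d) = s p := by
  obtain ⟨i, j, hij, heq⟩ :=
    Fintype.exists_ne_map_eq_of_card_lt (fun i : Fin (Fintype.card S + 1) => s i) (by simp)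
  rcases Fin.lt_or_lt_of_ne hij with h | h
  · exact ⟨i, j - i, by omega, by omega, by rwa [Nat.add_sub_cancel' h.le, eq_comm]⟩
  · exact ⟨j, i - j, by omega, by omega, by rwa [Nat.add_sub_cancel' h.le]⟩

theorem exists_pos_forall_le_neg_of_finite {L : Set ℝ} (hL : L.Finite) (hneg : ∀ x ∈ L, x < 0) :
    ∃ ε > 0, ∀ x ∈ L, x ≤ -ε := by
  rcases L.eq_empty_or_nonempty with rfl | hne
  · exact ⟨1, one_pos, by simp⟩
  · obtain ⟨m, hm, hmax⟩ := L.exists_max_image id hL hne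
    exact ⟨-m, neg_pos.2 (hneg m hm), fun x hx => by simpa using hmax x hx⟩

theorem exists_forall_loop_return_le [Finite S] [Finite A] {r : S × A → ℝ}
    (hneg : ∀ s a, IsTrajectory T s a → ∀ d, 0 < d → s d = s 0 →
      ∑ t ∈ range d, r (s t, a t) < 0) (n : ℕ) :
    ∃ ε > 0, ∀ s a, IsTrajectory T s a → ∀ d, 0 < d → d ≤ n → s d = s 0 →
      ∑ t ∈ range d, r (s t, a t) ≤ -(ε * d) := by
  set L : Set ℝ := {x | ∃ s a d, IsTrajectory T s a ∧ 0 < d ∧ d ≤ n ∧ s d = s 0 ∧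
    x = (∑ t ∈ range d, r (s t, a t)) / d}
  have hL : L.Finite := by
    refine ((Set.finite_le_nat n).biUnion fun d _ =>
      Set.finite_range fun x : Fin d → S × A => (∑ i, r (x i)) / d).subset ?_
    rintro _ ⟨s, a, d, -, -, hdn, -, rfl⟩
    exact Set.mem_biUnion hdn
      ⟨fun i => (s i, a i), by simp [Fin.sum_univ_eq_sum_range (fun t => r (s t, a t))]⟩
  obtain ⟨ε, hε, hLε⟩ := exists_pos_forall_le_neg_of_finite hL <| by
    rintro _ ⟨s, a, d, h, hd, -, hloop, rfl⟩
    exact div_neg_of_neg_of_pos (hneg s a h d hd hloop) (Nat.cast_pos.2 hd)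
  refine ⟨ε, hε, fun s a h d hd hdn hloop => ?_⟩
  have := hLε _ ⟨s, a, d, h, hd, hdn, hloop, rfl⟩
  rwa [div_le_iff₀ (Nat.cast_pos.2 hd), neg_mul] at this

theorem IsTrajectory.return_le [Fintype S] {r : S × A → ℝ} {M ε : ℝ} (hMε : 0 ≤ M + ε)
    (hM : ∀ x, r x ≤ M)
    (hloops : ∀ s a, IsTrajectory T s a → ∀ d, 0 < d → d ≤ Fintype.card S → s d = s 0 →
      ∑ t ∈ range d, r (s t, a t) ≤ -(ε * d))
    (h : IsTrajectory T s a) (N : ℕ) :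
    ∑ t ∈ range N, r (s t, a t) ≤ Fintype.card S * (M + ε) - ε * N := by
  induction N using Nat.strong_induction_on generalizing s a with
  | _ N ih =>
  by_cases hN : N < Fintype.card S
  · have hN' : (N : ℝ) ≤ Fintype.card S := by exact_mod_cast hN.le
    calc ∑ t ∈ range N, r (s t, a t) ≤ ∑ t ∈ range N, M := sum_le_sum fun t _ => hM _
      _ = N * M := by simp
      _ ≤ Fintype.card S * (M + ε) - ε * N := by nlinarith
  obtain ⟨p, d, hd, hpd, hloop⟩ := exists_loop_within_card s
  obtain ⟨m, rfl⟩ := Nat.exists_eq_add_of_le (hpd.trans (not_lt.1 hN))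
  have hloop_sum := hloops _ _ (h.shift p) d hd (by omega) (by simpa using hloop)
  have herased := ih (p + m) (by omega) (h.excise hloop)
  rw [sum_range_excise (fun t => r (s t, a t))]
  simp only [excise_apply₂ (fun x y => r (x, y))]
  push_cast at herased ⊢
  linarith

end Trajectory

theorem tendsto_atBot_of_le_sub_mul {u : ℕ → ℝ} {C ε : ℝ} (hε : 0 < ε)
    (hu : ∀ N, u N ≤ C - ε * N) :
    Tendsto u atTop atBot := by
  refine tendsto_atBot_mono hu ?_
  simp only [sub_eq_add_neg]
  exact tendsto_atBot_add_const_left _ C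
    (tendsto_neg_atTop_atBot.comp (tendsto_natCast_atTop_atTop.const_mul_atTop hε))

theorem neg_loops_return_tendsto_atBot_general
    {S A : Type*} [Fintype S] [Fintype A]
    (T : S → A → S) (r : S × A → ℝ)
    (hloops : ∀ (n : ℕ), 1 ≤ n → ∀ (s : Fin (n + 1) → S) (a : Fin n → A),
      (∀ i : Fin n, s i.succ = T (s i.castSucc) (a i)) →
      s (Fin.last n) = s 0 →
      (∑ i : Fin n, r (s i.castSucc, a i)) < 0) :
    ∀ (s : ℕ → S) (a : ℕ → A), (∀ t, s (t + 1) = T (s t) (a t)) →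
      Filter.Tendsto (fun N => ∑ t ∈ Finset.range N, r (s t, a t))
        Filter.atTop Filter.atBot := by
  intro s a hsa
  have hneg : ∀ s a, IsTrajectory T s a → ∀ d, 0 < d → s d = s 0 →
      ∑ t ∈ range d, r (s t, a t) < 0 := fun s a h d hd hloop => by
    have := hloops d hd (fun i => s i) (fun i => a i) (fun i => h i) (by simpa using hloop)
    simpa [Fin.sum_univ_eq_sum_range (fun t => r (s t, a t))] using this
  obtain ⟨ε, hε, hloop_le⟩ := exists_forall_loop_return_le hneg (Fintype.card S)
  obtain ⟨M, hM⟩ := Finite.exists_le r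
  exact tendsto_atBot_of_le_sub_mul hε <| IsTrajectory.return_le
    (add_nonneg (le_max_right M 0) hε.le) (fun x => (hM x).trans (le_max_left M 0)) hloop_le hsa

/-- If every loop has negative partial return, non-terminating trajectories have return diverging
to negative infinity. In a finite deterministic MDP, if every `T`-consistent segment of length
`n ≥ 1` whose final state equals its initial state has strictly negative partial return, then for
every infinite `T`-consistent trajectory the partial sums of rewards tend to `−∞`. -/
theorem neg_loops_return_tendsto_atBot
    {S A : Type*} [Fintype S] [Fintype A] [Nonempty S] [Nonempty A]
    (T : S → A → S) (r : S × A → ℝ)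
    (hloops : ∀ (n : ℕ), 1 ≤ n → ∀ (s : Fin (n + 1) → S) (a : Fin n → A),
      (∀ i : Fin n, s i.succ = T (s i.castSucc) (a i)) →
      s (Fin.last n) = s 0 →
      (∑ i : Fin n, r (s i.castSucc, a i)) < 0) :
    ∀ (s : ℕ → S) (a : ℕ → A), (∀ t, s (t + 1) = T (s t) (a t)) →
      Filter.Tendsto (fun N => ∑ t ∈ Finset.range N, r (s t, a t))
        Filter.atTop Filter.atBot :=
  neg_loops_return_tendsto_atBot_general T r hloops
end
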